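/- arXiv:1410.8490 — 6 statements merged into one kernel-verified Lean document; each statement's English description precedes it below -/
import Mathlib

section
/- For k ∈ ℤ, the function E_k(z) = e^{k L(z)} satisfies E_k(z) = z1^k for all z in the unbounded worm domain W. -/
open Complex Set

noncomputable def wormW : Set (ℂ × ℂ) :=
  {z | ‖z.1 - Complex.exp (Complex.I * Real.log (‖z.2‖ ^ 2))‖ ^ 2 < 1
       ∧ z.2 ≠ 0}

noncomputable def wormL (z : ℂ × ℂ) : ℂ :=
  Complex.log (z.1 * Complex.exp (-Complex.I * Real.log (‖z.2‖ ^ 2)))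
    + Complex.I * Real.log (‖z.2‖ ^ 2)

lemma stmt3_z1_ne (z : ℂ × ℂ) (hz : z ∈ wormW) : z.1 ≠ 0 := by
  rintro h
  obtain ⟨h1, _⟩ := hz
  rw [h] at h1
  simp [Complex.norm_exp] at h1

theorem stmt3 (k : ℤ) (z : ℂ × ℂ) (hz : z ∈ wormW) :
    Complex.exp ((k : ℂ) * wormL z) = z.1 ^ k := by
  have hz1 : z.1 ≠ 0 := stmt3_z1_ne z hz
  rw [Complex.exp_int_mul]
  congr 1
  unfold wormL
  rw [Complex.exp_add, Complex.exp_log (by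
    exact mul_ne_zero hz1 (Complex.exp_ne_zero _))]
  rw [mul_assoc, ← Complex.exp_add]
  simp
end

section
/- The map Φ(z) = (-i(L(z) - log 2), z2) is a biholomorphism from the unbounded worm W onto U = {(u+iv, w2) ∈ ℂ²: v > 0, |u - log|w2|²| < arccos(e^{-v}), w2 ≠ 0}, with inverse Φ^{-1}(w1, w2) = (2 e^{i w1}, w2). -/
open Complex Set

noncomputable def wormU : Set (ℂ × ℂ) :=
  {w | 0 < w.1.im ∧ |w.1.re - Real.log (‖w.2‖ ^ 2)| < Real.arccos (Real.exp (-w.1.im))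
       ∧ w.2 ≠ 0}

noncomputable def wormPhi (z : ℂ × ℂ) : ℂ × ℂ :=
  (-Complex.I * (wormL z - Real.log 2), z.2)

noncomputable def wormPsi (w : ℂ × ℂ) : ℂ × ℂ :=
  (2 * Complex.exp (Complex.I * w.1), w.2)

namespace WormAux

noncomputable def wt (z : ℂ × ℂ) : ℝ := Real.log (‖z.2‖ ^ 2)
noncomputable def wzeta (z : ℂ × ℂ) : ℂ := z.1 * Complex.exp (-Complex.I * wt z)

lemma exp_mul_exp_neg (t : ℝ) :
    Complex.exp (Complex.I * t) * Complex.exp (-Complex.I * t) = 1 := by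
  rw [← Complex.exp_add]; ring_nf; exact Complex.exp_zero

lemma abs_sub_eq (z : ℂ × ℂ) :
    ‖z.1 - Complex.exp (Complex.I * (Real.log (‖z.2‖ ^ 2) : ℝ))‖
      = ‖wzeta z - 1‖ := by
  have h : wzeta z - 1
      = (z.1 - Complex.exp (Complex.I * (wt z : ℝ))) * Complex.exp (-Complex.I * (wt z : ℝ)) := by
    rw [sub_mul, exp_mul_exp_neg]; rfl
  rw [show (Real.log (‖z.2‖ ^ 2) : ℝ) = wt z from rfl, h, norm_mul]
  have : ‖Complex.exp (-Complex.I * (wt z : ℝ))‖ = 1 := by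
    rw [Complex.norm_exp]; simp
  rw [this, mul_one]

lemma memW_iff (z : ℂ × ℂ) :
    z ∈ wormW ↔ ‖wzeta z - 1‖ < 1 ∧ z.2 ≠ 0 := by
  unfold wormW
  rw [mem_setOf_eq, ← abs_sub_eq]
  have hnn := norm_nonneg (z.1 - Complex.exp (Complex.I * (Real.log (‖z.2‖ ^ 2) : ℝ)))
  constructor
  · rintro ⟨h1, h2⟩
    exact ⟨by nlinarith, h2⟩
  · rintro ⟨h1, h2⟩
    exact ⟨by nlinarith, h2⟩

/-- Key disc characterization. -/
lemma disc_iff (ζ : ℂ) :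
    ‖ζ - 1‖ < 1 ↔
      ζ ≠ 0 ∧ ‖ζ‖ < 2 ∧ |Complex.arg ζ| < Real.arccos (‖ζ‖ / 2) := by
  have hsq : ‖ζ - 1‖ ^ 2 = ‖ζ‖ ^ 2 - 2 * ζ.re + 1 := by
    rw [← Complex.normSq_eq_norm_sq, ← Complex.normSq_eq_norm_sq]
    simp [Complex.normSq_apply, Complex.sub_re, Complex.sub_im]
    ring
  constructor
  · intro h
    have hne : ζ ≠ 0 := by rintro rfl; simp at h
    have hr : 0 < ‖ζ‖ := norm_pos_iff.mpr hne
    have h2 : ‖ζ‖ ^ 2 < 2 * ζ.re := by nlinarith [norm_nonneg (ζ - 1)]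
    have hcos : Real.cos (Complex.arg ζ) = ζ.re / ‖ζ‖ := Complex.cos_arg hne
    have hgt : ‖ζ‖ / 2 < Real.cos (Complex.arg ζ) := by
      rw [hcos, div_lt_div_iff₀ (by norm_num) hr]
      nlinarith
    have hle2 : ‖ζ‖ < 2 := by
      have := Real.cos_le_one (Complex.arg ζ)
      nlinarith
    refine ⟨hne, hle2, ?_⟩
    by_contra hcon
    push_neg at hcon
    have h1 : Real.cos (Real.arccos (‖ζ‖ / 2)) = ‖ζ‖ / 2 :=
      Real.cos_arccos (by linarith) (by linarith)
    have hmono : Real.cos |Complex.arg ζ| ≤ Real.cos (Real.arccos (‖ζ‖ / 2)) := by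
      rcases eq_or_lt_of_le hcon with he | hlt
      · rw [he]
      · exact le_of_lt (Real.strictAntiOn_cos
          ⟨Real.arccos_nonneg _, Real.arccos_le_pi _⟩
          ⟨abs_nonneg _, Complex.abs_arg_le_pi ζ⟩ hlt)
    rw [Real.cos_abs, h1] at hmono
    linarith
  · rintro ⟨hne, hlt2, harg⟩
    have hr : 0 < ‖ζ‖ := norm_pos_iff.mpr hne
    have h1 : Real.cos (Real.arccos (‖ζ‖ / 2)) = ‖ζ‖ / 2 :=
      Real.cos_arccos (by linarith) (by linarith)
    have habspi : |Complex.arg ζ| ≤ Real.pi :=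
      le_trans (le_of_lt harg) (Real.arccos_le_pi _)
    have hcoslt : ‖ζ‖ / 2 < Real.cos (Complex.arg ζ) := by
      rw [← Real.cos_abs, ← h1]
      exact Real.strictAntiOn_cos ⟨abs_nonneg _, habspi⟩
        ⟨Real.arccos_nonneg _, Real.arccos_le_pi _⟩ harg
    have hcos : Real.cos (Complex.arg ζ) = ζ.re / ‖ζ‖ := Complex.cos_arg hne
    rw [hcos, div_lt_div_iff₀ (by norm_num) hr] at hcoslt
    have hlt : ‖ζ - 1‖ ^ 2 < 1 := by rw [hsq]; nlinarith
    nlinarith [norm_nonneg (ζ - 1)]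

lemma exp_wormL (z : ℂ × ℂ) (hz : wzeta z ≠ 0) : Complex.exp (wormL z) = z.1 := by
  have : wormL z = Complex.log (wzeta z) + Complex.I * (wt z : ℝ) := rfl
  rw [this, Complex.exp_add, Complex.exp_log hz, wzeta, mul_assoc, mul_comm (Complex.exp _),
    exp_mul_exp_neg, mul_one]

lemma phi_re (z : ℂ × ℂ) : (wormPhi z).1.re = Complex.arg (wzeta z) + wt z := by
  have : (wormPhi z).1 = -Complex.I * (Complex.log (wzeta z) + Complex.I * (wt z : ℝ)
      - (Real.log 2 : ℝ)) := rfl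
  rw [this]
  simp [Complex.log_im]

lemma phi_im (z : ℂ × ℂ) :
    (wormPhi z).1.im = Real.log 2 - Real.log (‖wzeta z‖) := by
  have : (wormPhi z).1 = -Complex.I * (Complex.log (wzeta z) + Complex.I * (wt z : ℝ)
      - (Real.log 2 : ℝ)) := rfl
  rw [this]
  simp [Complex.log_re]

lemma wormL_eq (z : ℂ × ℂ) : wormL z = Complex.log (wzeta z) + Complex.I * (wt z : ℝ) := rfl

lemma W_props {z : ℂ × ℂ} (hz : z ∈ wormW) :
    wzeta z ≠ 0 ∧ ‖wzeta z‖ < 2 ∧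
      |Complex.arg (wzeta z)| < Real.arccos (‖wzeta z‖ / 2) ∧ z.2 ≠ 0 := by
  obtain ⟨h1, h2⟩ := (memW_iff z).mp hz
  obtain ⟨hne, hlt2, harg⟩ := (disc_iff _).mp h1
  exact ⟨hne, hlt2, harg, h2⟩

lemma mapsTo_phi : MapsTo wormPhi wormW wormU := by
  intro z hz
  obtain ⟨hne, hlt2, harg, h2⟩ := W_props hz
  have hr : 0 < ‖wzeta z‖ := norm_pos_iff.mpr hne
  have hlog : Real.log (‖wzeta z‖) < Real.log 2 := Real.log_lt_log hr hlt2
  have h2nd : (wormPhi z).2 = z.2 := rfl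
  refine ⟨?_, ?_, by rw [h2nd]; exact h2⟩
  · rw [phi_im]; linarith
  · rw [h2nd, phi_re, phi_im]
    have hexp : Real.exp (-(Real.log 2 - Real.log (‖wzeta z‖)))
        = ‖wzeta z‖ / 2 := by
      rw [neg_sub, Real.exp_sub, Real.exp_log hr, Real.exp_log two_pos]
    rw [hexp, show Real.log (‖z.2‖ ^ 2) = wt z from rfl, add_sub_cancel_right]
    exact harg

lemma psi_zeta (w : ℂ × ℂ) :
    wzeta (wormPsi w) = Complex.exp ((Real.log 2 : ℂ)
      + Complex.I * (w.1 - (Real.log (‖w.2‖ ^ 2) : ℝ))) := by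
  show (2 * Complex.exp (Complex.I * w.1)) * Complex.exp (-Complex.I * (wt w : ℝ)) = _
  have h2 : Complex.exp ((Real.log 2 : ℝ) : ℂ) = 2 := by
    rw [← Complex.ofReal_exp, Real.exp_log two_pos]; norm_num
  rw [Complex.exp_add, h2]
  have : Complex.I * w.1 + -Complex.I * (wt w : ℝ)
      = Complex.I * (w.1 - (Real.log (‖w.2‖ ^ 2) : ℝ)) := by
    rw [show (Real.log (‖w.2‖ ^ 2) : ℝ) = wt w from rfl]; ring
  rw [mul_assoc, ← Complex.exp_add, this]

lemma aux_re (a T : ℝ) (u : ℂ) : ((a : ℂ) + Complex.I * (u - (T : ℂ))).re = a + -u.im := by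
  simp only [Complex.add_re, Complex.ofReal_re, Complex.mul_re, Complex.I_re, Complex.I_im,
    Complex.sub_re, Complex.sub_im, Complex.ofReal_im]
  ring

lemma aux_im (a T : ℝ) (u : ℂ) : ((a : ℂ) + Complex.I * (u - (T : ℂ))).im = u.re - T := by
  simp only [Complex.add_im, Complex.ofReal_im, Complex.mul_im, Complex.I_re, Complex.I_im,
    Complex.sub_re, Complex.sub_im, Complex.ofReal_re]
  ring

lemma U_bound {w : ℂ × ℂ} (hw : w ∈ wormU) :
    |w.1.re - Real.log (‖w.2‖ ^ 2)| < Real.pi / 2 :=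
  lt_of_lt_of_le hw.2.1 (Real.arccos_le_pi_div_two.mpr (Real.exp_nonneg _))

lemma psi_abs (w : ℂ × ℂ) :
    ‖wzeta (wormPsi w)‖ = 2 * Real.exp (-w.1.im) := by
  rw [psi_zeta, Complex.norm_exp, aux_re, Real.exp_add, Real.exp_log two_pos]

lemma psi_arg {w : ℂ × ℂ} (hw : w ∈ wormU) :
    Complex.arg (wzeta (wormPsi w)) = w.1.re - Real.log (‖w.2‖ ^ 2) := by
  have hb := U_bound hw
  rw [abs_lt] at hb
  have hpi := Real.pi_pos
  have hlog : Complex.log (wzeta (wormPsi w))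
      = (Real.log 2 : ℂ) + Complex.I * (w.1 - (Real.log (‖w.2‖ ^ 2) : ℝ)) := by
    rw [psi_zeta]
    refine Complex.log_exp ?_ ?_ <;> rw [aux_im]
    · linarith [hb.1]
    · linarith [hb.2]
  rw [← Complex.log_im, hlog, aux_im]

lemma mapsTo_psi : MapsTo wormPsi wormU wormW := by
  intro w hw
  obtain ⟨hv, hu, hw2⟩ := hw
  rw [memW_iff]
  refine ⟨?_, hw2⟩
  rw [disc_iff]
  have hne : wzeta (wormPsi w) ≠ 0 := by rw [psi_zeta]; exact Complex.exp_ne_zero _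
  have hexp1 : Real.exp (-w.1.im) < 1 := by
    rw [← Real.exp_zero]; exact Real.exp_lt_exp.mpr (by linarith)
  refine ⟨hne, ?_, ?_⟩
  · rw [psi_abs]; linarith
  · rw [psi_arg ⟨hv, hu, hw2⟩, psi_abs]
    have : 2 * Real.exp (-w.1.im) / 2 = Real.exp (-w.1.im) := by ring
    rw [this]
    exact hu

lemma psi_phi {z : ℂ × ℂ} (hz : z ∈ wormW) : wormPsi (wormPhi z) = z := by
  obtain ⟨hne, -, -, -⟩ := W_props hz
  have hL := exp_wormL z hne
  have h1 : Complex.I * (-Complex.I * (wormL z - ((Real.log 2 : ℝ) : ℂ)))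
      = wormL z - ((Real.log 2 : ℝ) : ℂ) := by
    have : Complex.I * -Complex.I = 1 := by
      rw [mul_neg, Complex.I_mul_I]; norm_num
    rw [← mul_assoc, this, one_mul]
  have h2 : Complex.exp (((Real.log 2 : ℝ) : ℂ)) = 2 := by
    rw [← Complex.ofReal_exp, Real.exp_log two_pos]; norm_num
  show (2 * Complex.exp (Complex.I * (-Complex.I * (wormL z - ((Real.log 2 : ℝ) : ℂ)))), z.2) = z
  rw [h1, Complex.exp_sub, hL, h2]
  ext <;> simp <;> ring

lemma phi_psi {w : ℂ × ℂ} (hw : w ∈ wormU) : wormPhi (wormPsi w) = w := by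
  have hb := U_bound hw
  rw [abs_lt] at hb
  have hpi := Real.pi_pos
  have hlog : Complex.log (wzeta (wormPsi w))
      = (Real.log 2 : ℂ) + Complex.I * (w.1 - (Real.log (‖w.2‖ ^ 2) : ℝ)) := by
    rw [psi_zeta]
    refine Complex.log_exp ?_ ?_ <;> rw [aux_im]
    · linarith [hb.1]
    · linarith [hb.2]
  have hL : wormL (wormPsi w) = (Real.log 2 : ℂ) + Complex.I * w.1 := by
    rw [wormL_eq, hlog]
    have ht : (wt (wormPsi w) : ℝ) = Real.log (‖w.2‖ ^ 2) := rfl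
    rw [ht]
    push_cast
    ring
  show (-Complex.I * (wormL (wormPsi w) - ((Real.log 2 : ℝ) : ℂ)), w.2) = w
  rw [hL]
  have : -Complex.I * ((Real.log 2 : ℂ) + Complex.I * w.1 - ((Real.log 2 : ℝ) : ℂ)) = w.1 := by
    have hI : Complex.I ^ 2 = -1 := Complex.I_sq
    push_cast
    ring_nf
    rw [hI]
    ring
  rw [this]

lemma abs_sub_one_sq (ζ : ℂ) :
    ‖ζ - 1‖ ^ 2 = ‖ζ‖ ^ 2 - 2 * ζ.re + 1 := by
  rw [← Complex.normSq_eq_norm_sq, ← Complex.normSq_eq_norm_sq]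
  simp [Complex.normSq_apply, Complex.sub_re, Complex.sub_im]
  ring

lemma re_pos_of_disc {ζ : ℂ} (h : ‖ζ - 1‖ < 1) : 0 < ζ.re := by
  have hne : ζ ≠ 0 := ((disc_iff ζ).mp h).1
  have hsq := abs_sub_one_sq ζ
  nlinarith [norm_nonneg (ζ - 1), norm_pos_iff.mpr hne]

lemma fst_ne_zero {z : ℂ × ℂ} (hz : z ∈ wormW) : z.1 ≠ 0 := by
  intro h
  exact (W_props hz).1 (by simp [wzeta, h])

lemma continuous_abssq : Continuous fun z : ℂ × ℂ => ‖z.2‖ ^ 2 :=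
  (continuous_norm.comp continuous_snd).pow 2

lemma contAt_wt {z : ℂ × ℂ} (hz : z.2 ≠ 0) : ContinuousAt (fun z => (wt z : ℝ)) z := by
  have h0 : ‖z.2‖ ^ 2 ≠ 0 := by
    simpa using hz
  exact ContinuousAt.comp (g := Real.log) (f := fun z : ℂ × ℂ => ‖z.2‖ ^ 2)
    (Real.continuousAt_log h0) continuous_abssq.continuousAt

lemma contAt_zeta {z : ℂ × ℂ} (hz : z.2 ≠ 0) : ContinuousAt wzeta z := by
  have h1 : ContinuousAt (fun z : ℂ × ℂ => Complex.exp (-Complex.I * (wt z : ℝ))) z :=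
    Complex.continuous_exp.continuousAt.comp
      (continuousAt_const.mul (Complex.continuous_ofReal.continuousAt.comp (contAt_wt hz)))
  exact continuous_fst.continuousAt.mul h1

lemma contAt_wormL {z : ℂ × ℂ} (hz : z ∈ wormW) : ContinuousAt wormL z := by
  obtain ⟨h1, h2⟩ := (memW_iff z).mp hz
  have hslit : wzeta z ∈ Complex.slitPlane :=
    Complex.mem_slitPlane_iff.mpr (Or.inl (re_pos_of_disc h1))
  have hlog : ContinuousAt (fun z => Complex.log (wzeta z)) z :=
    (continuousAt_clog hslit).comp (contAt_zeta h2)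
  have : ContinuousAt (fun z : ℂ × ℂ => Complex.log (wzeta z) + Complex.I * (wt z : ℝ)) z :=
    hlog.add (continuousAt_const.mul (Complex.continuous_ofReal.continuousAt.comp (contAt_wt h2)))
  exact this.congr (by filter_upwards with z using (wormL_eq z).symm)

lemma isOpen_W : IsOpen wormW := by
  have hs : IsOpen {z : ℂ × ℂ | z.2 ≠ 0} := isOpen_compl_singleton.preimage continuous_snd
  have hcont : ContinuousOn
      (fun z : ℂ × ℂ =>
        ‖z.1 - Complex.exp (Complex.I * (Real.log (‖z.2‖ ^ 2) : ℝ))‖ ^ 2)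
      {z : ℂ × ℂ | z.2 ≠ 0} := by
    intro z hz
    apply ContinuousAt.continuousWithinAt
    have : ContinuousAt (fun z : ℂ × ℂ =>
        z.1 - Complex.exp (Complex.I * ((wt z : ℝ) : ℂ))) z :=
      continuous_fst.continuousAt.sub (Complex.continuous_exp.continuousAt.comp
        (continuousAt_const.mul (Complex.continuous_ofReal.continuousAt.comp (contAt_wt hz))))
    exact ((continuous_norm.continuousAt.comp this).pow 2)
  have : wormW = {z : ℂ × ℂ | z.2 ≠ 0} ∩
      (fun z : ℂ × ℂ =>
        ‖z.1 - Complex.exp (Complex.I * (Real.log (‖z.2‖ ^ 2) : ℝ))‖ ^ 2)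
        ⁻¹' Iio 1 := by
    ext z; exact ⟨fun h => ⟨h.2, h.1⟩, fun h => ⟨h.2, h.1⟩⟩
  rw [this]
  exact hcont.isOpen_inter_preimage hs isOpen_Iio

lemma eq_zero_of_exp (S : Set (ℂ × ℂ)) (hS : IsPreconnected S) (g : ℂ × ℂ → ℂ)
    (hg : ContinuousOn g S) (h1 : ∀ z ∈ S, Complex.exp (g z) = 1)
    (z0 : ℂ × ℂ) (hz0 : z0 ∈ S) (hg0 : g z0 = 0) : ∀ z ∈ S, g z = 0 := by
  have hint : ∀ z ∈ S, ∃ n : ℤ, g z = n * (2 * Real.pi * Complex.I) := fun z hz =>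
    Complex.exp_eq_one_iff.mp (h1 z hz)
  have him : ∀ (m : ℤ) (x : ℂ), x = m * (2 * Real.pi * Complex.I) → x.im = m * (2 * Real.pi) := by
    intro m x hx
    rw [hx]
    simp [Complex.mul_im, Complex.mul_re]
  intro z hz
  obtain ⟨n, hn⟩ := hint z hz
  suffices hn0 : n = 0 by rw [hn, hn0]; simp
  by_contra hne
  have hh : ContinuousOn (fun z => (g z).im) S := Complex.continuous_im.comp_continuousOn hg
  have hOC := (hS.image _ hh).ordConnected
  have hmem0 : (0 : ℝ) ∈ (fun z => (g z).im) '' S := ⟨z0, hz0, by simp [hg0]⟩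
  have hmemn : ((n : ℝ) * (2 * Real.pi)) ∈ (fun z => (g z).im) '' S :=
    ⟨z, hz, him n _ hn⟩
  have hpi := Real.pi_pos
  have key : ∀ c : ℝ, c ∈ (fun z => (g z).im) '' S → ∃ m : ℤ, c = m * (2 * Real.pi) := by
    rintro c ⟨y, hy, rfl⟩
    obtain ⟨m, hm⟩ := hint y hy
    exact ⟨m, him m _ hm⟩
  rcases lt_or_gt_of_ne hne with hneg | hpos
  · have hn1 : (n : ℝ) ≤ -1 := by
      have h9 : n ≤ -1 := by omega
      exact_mod_cast h9
    have hc : (-Real.pi) ∈ (fun z => (g z).im) '' S :=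
      hOC.out hmemn hmem0 ⟨by nlinarith, by linarith⟩
    obtain ⟨m, hm⟩ := key _ hc
    have h0 : ((2 * m + 1 : ℤ) : ℝ) * Real.pi = 0 := by push_cast; linarith
    rcases mul_eq_zero.mp h0 with h | h
    · have : (2 * m + 1 : ℤ) = 0 := by exact_mod_cast h
      omega
    · linarith
  · have hn1 : (1 : ℝ) ≤ (n : ℝ) := by
      have h9 : 1 ≤ n := by omega
      exact_mod_cast h9
    have hc : Real.pi ∈ (fun z => (g z).im) '' S :=
      hOC.out hmem0 hmemn ⟨by linarith, by nlinarith⟩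
    obtain ⟨m, hm⟩ := key _ hc
    have h0 : ((2 * m - 1 : ℤ) : ℝ) * Real.pi = 0 := by push_cast; linarith
    rcases mul_eq_zero.mp h0 with h | h
    · have : (2 * m - 1 : ℤ) = 0 := by exact_mod_cast h
      omega
    · linarith

lemma diff_psi : DifferentiableOn ℂ wormPsi wormU := by
  apply Differentiable.differentiableOn
  apply Differentiable.prodMk
  · exact (differentiable_const _).mul
      (Complex.differentiable_exp.comp ((differentiable_const _).mul differentiable_fst))
  · exact differentiable_snd

lemma diff_phi : DifferentiableOn ℂ wormPhi wormW := by
  intro z0 hz0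
  apply DifferentiableAt.differentiableWithinAt
  obtain ⟨hne, hlt2, harg, h2⟩ := W_props hz0
  have hz01 : z0.1 ≠ 0 := fst_ne_zero hz0
  have hslitopen : IsOpen {z : ℂ × ℂ | ‖z.1 - z0.1‖ < ‖z0.1‖} :=
    isOpen_lt (continuous_norm.comp (continuous_fst.sub continuous_const))
      continuous_const
  set V := wormW ∩ {z : ℂ × ℂ | ‖z.1 - z0.1‖ < ‖z0.1‖} with hV
  have hVopen : IsOpen V := isOpen_W.inter hslitopen
  have hz0V : z0 ∈ V := ⟨hz0, by simpa using norm_pos_iff.mpr hz01⟩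
  obtain ⟨r, hr, hball⟩ := Metric.isOpen_iff.mp hVopen z0 hz0V
  have hslit : ∀ z ∈ V, z.1 / z0.1 ∈ Complex.slitPlane := by
    intro z hz
    rw [Complex.mem_slitPlane_iff]
    left
    apply re_pos_of_disc
    rw [show z.1 / z0.1 - 1 = (z.1 - z0.1) / z0.1 by field_simp, norm_div,
      div_lt_one (norm_pos_iff.mpr hz01)]
    exact hz.2
  set g : ℂ × ℂ → ℂ := fun z => wormL z - (Complex.log (z.1 / z0.1) + wormL z0) with hgdef
  have hgball : ∀ z ∈ Metric.ball z0 r, g z = 0 := by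
    apply eq_zero_of_exp _ (convex_ball z0 r).isPreconnected
    · intro z hz
      have hzV : z ∈ V := hball hz
      apply ContinuousAt.continuousWithinAt
      have hd : ContinuousAt (fun z : ℂ × ℂ => z.1 / z0.1) z :=
        continuous_fst.continuousAt.div_const z0.1
      exact (contAt_wormL hzV.1).sub
        ((ContinuousAt.comp (g := Complex.log) (f := fun z : ℂ × ℂ => z.1 / z0.1)
          (continuousAt_clog (hslit z hzV)) hd).add continuousAt_const)
    · intro z hz
      have hzV : z ∈ V := hball hz
      have hz1 : z.1 ≠ 0 := fst_ne_zero hzV.1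
      have hdiv : z.1 / z0.1 ≠ 0 := div_ne_zero hz1 hz01
      rw [hgdef]
      simp only
      rw [Complex.exp_sub, exp_wormL z (W_props hzV.1).1, Complex.exp_add,
        Complex.exp_log hdiv, exp_wormL z0 hne, div_mul_cancel₀ _ hz01, div_self hz1]
    · exact Metric.mem_ball_self hr
    · rw [hgdef]
      simp only
      rw [div_self hz01, Complex.log_one]
      ring
  have hF : DifferentiableAt ℂ (fun z : ℂ × ℂ =>
      (-Complex.I * (Complex.log (z.1 / z0.1) + wormL z0 - ((Real.log 2 : ℝ) : ℂ)), z.2)) z0 := by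
    apply DifferentiableAt.prodMk
    · apply DifferentiableAt.mul (differentiableAt_const _)
      apply DifferentiableAt.sub _ (differentiableAt_const _)
      apply DifferentiableAt.add _ (differentiableAt_const _)
      have h1 : DifferentiableAt ℂ Complex.log (z0.1 / z0.1) := by
        rw [div_self hz01]
        exact Complex.differentiableAt_log Complex.one_mem_slitPlane
      have h2 : DifferentiableAt ℂ (fun z : ℂ × ℂ => z.1 / z0.1) z0 :=
        by simp only [div_eq_mul_inv]; exact differentiableAt_fst.mul (differentiableAt_const _)
      exact h1.comp z0 h2
    · exact differentiableAt_snd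
  apply hF.congr_of_eventuallyEq
  filter_upwards [Metric.ball_mem_nhds z0 hr] with z hzb
  have hg0 : wormL z = Complex.log (z.1 / z0.1) + wormL z0 := by
    have := hgball z hzb
    rw [hgdef] at this
    simp only at this
    linear_combination this
  show wormPhi z = _
  unfold wormPhi
  rw [hg0]

end WormAux

theorem stmt5 :
    (MapsTo wormPhi wormW wormU) ∧ wormPhi '' wormW = wormU ∧
    DifferentiableOn ℂ wormPhi wormW ∧
    (MapsTo wormPsi wormU wormW) ∧ DifferentiableOn ℂ wormPsi wormU ∧
    (∀ z ∈ wormW, wormPsi (wormPhi z) = z) ∧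
    (∀ w ∈ wormU, wormPhi (wormPsi w) = w) := by
  refine ⟨WormAux.mapsTo_phi, ?_, WormAux.diff_phi, WormAux.mapsTo_psi, WormAux.diff_psi,
    fun z hz => WormAux.psi_phi hz, fun w hw => WormAux.phi_psi hw⟩
  refine Subset.antisymm WormAux.mapsTo_phi.image_subset ?_
  intro w hw
  exact ⟨wormPsi w, WormAux.mapsTo_psi hw, WormAux.phi_psi hw⟩
end

section
/- If f is an entire function on ℂ with ∫_ℂ |e^{-i(j+1)z/2} f(z)|² dV(z) < ∞ for some j ∈ ℤ, then f ≡ 0. -/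
open Complex MeasureTheory Real Set

/-- Circle mean value property for entire functions. -/
lemma circle_mvp {h : ℂ → ℂ} (hd : Differentiable ℂ h) (c : ℂ) {r : ℝ} (hr : 0 < r) :
    (∫ θ in (0:ℝ)..(2*π), h (circleMap c r θ)) = (2*π : ℝ) • h c := by
  have key := circleIntegral_sub_center_inv_smul_of_differentiable_on_off_countable
    (f := h) (c := c) (s := ∅) hr Set.countable_empty (hd.continuous.continuousOn)
    (fun z _ => hd.differentiableAt)
  rw [circleIntegral] at key
  simp only [deriv_circleMap, circleMap_sub_center, smul_eq_mul] at key
  have hne : ∀ θ : ℝ, circleMap 0 r θ ≠ 0 := fun θ => circleMap_ne_center hr.ne'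
  have h1 : ∀ θ : ℝ, circleMap 0 r θ * I * ((circleMap 0 r θ)⁻¹ * h (circleMap c r θ))
      = I * h (circleMap c r θ) := by
    intro θ
    rw [mul_comm (circleMap 0 r θ) I, mul_assoc, mul_inv_cancel_left₀ (hne θ)]
  simp only [h1] at key
  rw [intervalIntegral.integral_const_mul] at key
  have : I * (∫ θ in (0:ℝ)..(2*π), h (circleMap c r θ)) = I * ((2*π : ℂ) * h c) := by
    rw [key]; ring
  have h2 := mul_left_cancel₀ I_ne_zero this
  rw [h2, Complex.real_smul]
  push_cast
  ring

/-- Lower bound for the circle integral of the norm. -/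
lemma circle_norm_lower {h : ℂ → ℂ} (hd : Differentiable ℂ h) (c : ℂ) {r : ℝ} (hr : 0 < r) :
    2 * π * ‖h c‖ ≤ ∫ θ in Ioo (-π) π, ‖h (circleMap c r θ)‖ := by
  have hper : Function.Periodic (fun θ => ‖h (circleMap c r θ)‖) (2*π) := fun θ => by
    simp [periodic_circleMap c r θ]
  have heq : (∫ θ in (-π)..(-π + 2*π), ‖h (circleMap c r θ)‖)
      = ∫ θ in (0:ℝ)..(0 + 2*π), ‖h (circleMap c r θ)‖ := hper.intervalIntegral_add_eq (-π) 0
  have h1 : 2 * π * ‖h c‖ ≤ ∫ θ in (0:ℝ)..(2*π), ‖h (circleMap c r θ)‖ := by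
    have := circle_mvp hd c hr
    calc 2 * π * ‖h c‖ = ‖(2*π : ℝ) • h c‖ := by
          rw [norm_smul, Real.norm_eq_abs, abs_of_pos Real.two_pi_pos]
      _ = ‖∫ θ in (0:ℝ)..(2*π), h (circleMap c r θ)‖ := by rw [this]
      _ ≤ ∫ θ in (0:ℝ)..(2*π), ‖h (circleMap c r θ)‖ :=
          intervalIntegral.norm_integral_le_integral_norm Real.two_pi_pos.le
  rw [show (-π) + 2*π = π by ring, zero_add] at heq
  have h2 : (∫ θ in Ioo (-π) π, ‖h (circleMap c r θ)‖)
      = ∫ θ in (0:ℝ)..(2*π), ‖h (circleMap c r θ)‖ := by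
    rw [← heq, intervalIntegral.integral_of_le (by linarith [Real.pi_pos] : (-π) ≤ π),
      MeasureTheory.integral_Ioc_eq_integral_Ioo]
  rw [h2]; exact h1

set_option maxHeartbeats 1600000 in
/-- An entire function which is integrable over ℂ vanishes identically. -/
lemma entire_integrable_eq_zero {h : ℂ → ℂ} (hd : Differentiable ℂ h)
    (hi : Integrable h volume) : ∀ c, h c = 0 := by
  intro c
  set M : ℝ := ∫ z, ‖h z‖ with hM
  have hM0 : 0 ≤ M := integral_nonneg fun z => norm_nonneg _
  -- key estimate : for all T > 0, π * T^2 * ‖h c‖ ≤ M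
  have key : ∀ T : ℝ, 0 < T → π * T^2 * ‖h c‖ ≤ M := by
    intro T hT
    -- work with lintegrals
    set G : ℂ → ENNReal := fun z => ENNReal.ofReal ‖h z‖ with hG
    have hGm : Measurable G := by
      apply Measurable.ennreal_ofReal
      exact (hd.continuous.norm).measurable
    have htot : ∫⁻ z, G z = ENNReal.ofReal M := by
      rw [hM, ← MeasureTheory.ofReal_integral_eq_lintegral_ofReal hi.norm
        (Filter.Eventually.of_forall fun z => norm_nonneg _)]
    -- the polar map
    set ψ : ℝ × ℝ → ℂ := fun q => c + Complex.measurableEquivRealProd.symm q with hψdef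
    have hψmp : MeasurePreserving ψ := by
      exact (measurePreserving_add_left volume c).comp
        Complex.volume_preserving_equiv_real_prod.symm
    have hψemb : MeasurableEmbedding ψ := by
      have : ψ = (fun z : ℂ => c + z) ∘ Complex.measurableEquivRealProd.symm := rfl
      rw [this]
      exact (MeasurableEquiv.addLeft c).measurableEmbedding.comp
        Complex.measurableEquivRealProd.symm.measurableEmbedding
    set S : Set (ℝ × ℝ) := Ioo 0 T ×ˢ Ioo (-π) π with hS
    have hSm : MeasurableSet S := measurableSet_Ioo.prod measurableSet_Ioo
    -- derivative of polarCoord.symm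
    set B : ℝ × ℝ → ℝ × ℝ →L[ℝ] ℝ × ℝ := fun p =>
      LinearMap.toContinuousLinearMap (Matrix.toLin (Module.Basis.finTwoProd ℝ) (Module.Basis.finTwoProd ℝ)
        !![Real.cos p.2, -p.1 * Real.sin p.2; Real.sin p.2, p.1 * Real.cos p.2]) with hB
    have hBd : ∀ p ∈ S, HasFDerivWithinAt polarCoord.symm (B p) S p := fun p _ =>
      (hasFDerivAt_polarCoord_symm p).hasFDerivWithinAt
    have hBdet : ∀ p : ℝ × ℝ, (B p).det = p.1 := by
      intro p
      conv_rhs => rw [← one_mul p.1, ← Real.cos_sq_add_sin_sq p.2]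
      simp only [hB, neg_mul, LinearMap.det_toContinuousLinearMap, LinearMap.det_toLin,
        Matrix.det_fin_two_of, sub_neg_eq_add]
      ring
    have hinj : Set.InjOn polarCoord.symm S := by
      apply polarCoord.symm.injOn.mono
      intro p hp
      show p ∈ polarCoord.target
      exact ⟨hp.1.1, hp.2⟩
    -- change of variables
    have hcov : ∫⁻ q in polarCoord.symm '' S, G (ψ q)
        = ∫⁻ p in S, ENNReal.ofReal |p.1| * G (ψ (polarCoord.symm p)) := by
      exact lintegral_image_eq_lintegral_abs_det_fderiv_mul volume hSm hBd hinj
        (fun q => G (ψ q)) |>.trans (by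
          apply setLIntegral_congr_fun hSm
          exact fun p _ => by rw [hBdet])
    -- identify ψ (polarCoord.symm p) with circleMap
    have hcirc : ∀ p : ℝ × ℝ, ψ (polarCoord.symm p) = circleMap c p.1 p.2 := by
      intro p
      simp only [hψdef, circleMap]
      congr 1
      have : (Complex.measurableEquivRealProd.symm (polarCoord.symm p) : ℂ)
          = Complex.polarCoord.symm p := rfl
      rw [this, Complex.polarCoord_symm_apply, Complex.exp_mul_I]
      push_cast
      ring
    -- the chain of inequalities
    have step1 : ∫⁻ p in S, ENNReal.ofReal |p.1| * G (circleMap c p.1 p.2) ≤ ENNReal.ofReal M := by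
      rw [← htot]
      calc ∫⁻ p in S, ENNReal.ofReal |p.1| * G (circleMap c p.1 p.2)
          = ∫⁻ p in S, ENNReal.ofReal |p.1| * G (ψ (polarCoord.symm p)) := by
            apply setLIntegral_congr_fun hSm
            exact fun p _ => by rw [hcirc]
        _ = ∫⁻ q in polarCoord.symm '' S, G (ψ q) := hcov.symm
        _ = ∫⁻ z in ψ '' (polarCoord.symm '' S), G z :=
            hψmp.setLIntegral_comp_emb hψemb G _
        _ ≤ ∫⁻ z, G z := setLIntegral_le_lintegral _ _
    -- lower-bound the LHS via Fubini
    have meas1 : Measurable fun p : ℝ × ℝ => ENNReal.ofReal |p.1| * G (circleMap c p.1 p.2) := by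
      apply Measurable.mul (f := fun p : ℝ × ℝ => ENNReal.ofReal |p.1|) (g := fun p => G (circleMap c p.1 p.2))
      · exact Measurable.ennreal_ofReal (by fun_prop)
      · apply Measurable.ennreal_ofReal
        have hcont : Continuous fun p : ℝ × ℝ => ‖h (circleMap c p.1 p.2)‖ := by
          apply Continuous.norm
          apply hd.continuous.comp
          unfold circleMap
          fun_prop
        exact hcont.measurable
    have fub : ∫⁻ p in S, ENNReal.ofReal |p.1| * G (circleMap c p.1 p.2)
        = ∫⁻ r in Ioo (0:ℝ) T, ∫⁻ θ in Ioo (-π) π,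
            ENNReal.ofReal |r| * G (circleMap c r θ) := by
      have hrestr : (volume : Measure (ℝ × ℝ)).restrict (Ioo 0 T ×ˢ Ioo (-π) π)
          = (volume.restrict (Ioo 0 T)).prod (volume.restrict (Ioo (-π) π)) := by
        rw [Measure.volume_eq_prod, Measure.prod_restrict]
      rw [hS, hrestr, lintegral_prod _ meas1.aemeasurable]
    have inner : ∀ r : ℝ, 0 < r → ENNReal.ofReal (2 * π * ‖h c‖) ≤
        ∫⁻ θ in Ioo (-π) π, G (circleMap c r θ) := by
      intro r hr
      have hcont : Continuous fun θ => ‖h (circleMap c r θ)‖ :=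
        (hd.continuous.comp (continuous_circleMap c r)).norm
      have hint : IntegrableOn (fun θ => ‖h (circleMap c r θ)‖) (Ioo (-π) π) := by
        exact ((hcont.intervalIntegrable (-π) π).1).mono_set Ioo_subset_Ioc_self
      have : ∫⁻ θ in Ioo (-π) π, G (circleMap c r θ)
          = ENNReal.ofReal (∫ θ in Ioo (-π) π, ‖h (circleMap c r θ)‖) := by
        rw [← MeasureTheory.ofReal_integral_eq_lintegral_ofReal hint
          (Filter.Eventually.of_forall fun θ => norm_nonneg _)]
      rw [this]
      exact ENNReal.ofReal_le_ofReal (circle_norm_lower hd c hr)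
    have lower : ENNReal.ofReal (π * T^2 * ‖h c‖) ≤
        ∫⁻ p in S, ENNReal.ofReal |p.1| * G (circleMap c p.1 p.2) := by
      rw [fub]
      have step : ∀ r ∈ Ioo (0:ℝ) T,
          ENNReal.ofReal r * ENNReal.ofReal (2 * π * ‖h c‖) ≤
          ∫⁻ θ in Ioo (-π) π, ENNReal.ofReal |r| * G (circleMap c r θ) := by
        intro r hr
        rw [lintegral_const_mul _ (by
          apply Measurable.ennreal_ofReal
          exact ((hd.continuous.comp (continuous_circleMap c r)).norm).measurable)]
        rw [abs_of_pos hr.1]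
        exact mul_le_mul_right (inner r hr.1) _
      calc ENNReal.ofReal (π * T^2 * ‖h c‖)
          = (∫⁻ r in Ioo (0:ℝ) T, ENNReal.ofReal r) * ENNReal.ofReal (2 * π * ‖h c‖) := by
            have hid : ∫⁻ r in Ioo (0:ℝ) T, ENNReal.ofReal r
                = ENNReal.ofReal (T^2/2) := by
              have hintid : IntegrableOn (fun r : ℝ => r) (Ioo 0 T) :=
                ((continuous_id.intervalIntegrable 0 T).1).mono_set Ioo_subset_Ioc_self
              rw [← MeasureTheory.ofReal_integral_eq_lintegral_ofReal hintid
                ((ae_restrict_iff' measurableSet_Ioo).mpr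
                  (Filter.Eventually.of_forall fun x hx => hx.1.le))]
              congr 1
              rw [← MeasureTheory.integral_Ioc_eq_integral_Ioo,
                ← intervalIntegral.integral_of_le hT.le]
              simpa using integral_id
            rw [hid, ← ENNReal.ofReal_mul (by positivity)]
            congr 1
            ring
        _ = ∫⁻ r in Ioo (0:ℝ) T, ENNReal.ofReal r * ENNReal.ofReal (2 * π * ‖h c‖) := by
            rw [lintegral_mul_const _ measurable_id'.ennreal_ofReal]
        _ ≤ _ := setLIntegral_mono' measurableSet_Ioo step
    have := le_trans lower step1
    rw [ENNReal.ofReal_le_ofReal_iff hM0] at this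
    exact this
  by_contra hne
  have hpos : 0 < ‖h c‖ := norm_pos_iff.mpr hne
  set x : ℝ := M / (π * ‖h c‖) with hx
  have hx0 : 0 ≤ x := by positivity
  set T : ℝ := Real.sqrt x + 1 with hTdef
  have hT0 : 0 < T := by positivity
  have h1 := key T hT0
  have hT2 : x < T^2 := by
    nlinarith [Real.sq_sqrt hx0, Real.sqrt_nonneg x]
  have hne' : ‖h c‖ ≠ 0 := hpos.ne'
  have hM' : π * ‖h c‖ * x = M := by
    rw [hx, mul_div_assoc']
    exact mul_div_cancel_left₀ M (by positivity)
  nlinarith [mul_pos (mul_pos Real.pi_pos hpos) (sub_pos.mpr hT2)]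

theorem stmt7 (f : ℂ → ℂ) (hf : Differentiable ℂ f) (j : ℤ)
    (hint : Integrable
      (fun z : ℂ => ‖Complex.exp (-Complex.I * ((j : ℂ) + 1) * z / 2) * f z‖ ^ 2) volume) :
    f = 0 := by
  set g : ℂ → ℂ := fun z => Complex.exp (-Complex.I * ((j : ℂ) + 1) * z / 2) * f z with hg
  have hgd : Differentiable ℂ g := by
    apply Differentiable.mul _ hf
    apply Complex.differentiable_exp.comp
    fun_prop
  set H : ℂ → ℂ := fun z => g z * g z with hH
  have hHd : Differentiable ℂ H := hgd.mul hgd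
  have hHi : Integrable H volume := by
    apply Integrable.mono' hint (hHd.continuous.aestronglyMeasurable)
    apply Filter.Eventually.of_forall
    intro z
    simp only [hH, norm_mul]
    rw [← pow_two]
    simp [hg]
  have hz := entire_integrable_eq_zero hHd hHi
  funext z
  have := hz z
  simp only [hH] at this
  have hgz : g z = 0 := by
    exact mul_self_eq_zero.mp this
  simp only [hg] at hgz
  rcases mul_eq_zero.mp hgz with h | h
  · exact absurd h (Complex.exp_ne_zero _)
  · exact h
end

section
/- For ξ ∈ ℝ, ξ ≠ 0, the Fourier transform satisfies ∫_ℝ e^{-iξs} sech²(s) ds = πξ / sinh(πξ/2), and at ξ = 0 the integral equals 2. -/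
open Real Complex MeasureTheory Set


noncomputable def phi (s : ℝ) : ℝ := (1 + Real.exp (-(2*s)))⁻¹
noncomputable def phi' (s : ℝ) : ℝ := 2 * Real.exp (-(2*s)) / (1 + Real.exp (-(2*s)))^2

lemma phi_mem (s : ℝ) : phi s ∈ Set.Ioo (0:ℝ) 1 := by
  have hE : 0 < Real.exp (-(2*s)) := Real.exp_pos _
  constructor
  · rw [phi]; positivity
  · rw [phi, inv_lt_one_iff₀]; right; linarith

lemma phi_mono : StrictMono phi := by
  intro a b hab
  have hb : 0 < 1 + Real.exp (-(2*b)) := by positivity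
  rw [phi, phi]
  apply inv_strictAnti₀ hb
  have := Real.exp_lt_exp.2 (show -(2*b) < -(2*a) by linarith)
  linarith

lemma phi_image : phi '' Set.univ = Set.Ioo (0:ℝ) 1 := by
  apply Set.eq_of_subset_of_subset
  · rintro x ⟨s, -, rfl⟩; exact phi_mem s
  · rintro y ⟨hy0, hy1⟩
    refine ⟨-(Real.log ((1-y)/y))/2, trivial, ?_⟩
    have h1y : 0 < 1 - y := by linarith
    have : Real.exp (-(2 * (-(Real.log ((1-y)/y))/2))) = (1-y)/y := by
      rw [show -(2 * (-(Real.log ((1-y)/y))/2)) = Real.log ((1-y)/y) by ring,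
        Real.exp_log (by positivity)]
    rw [phi, this]
    field_simp; ring

lemma phi_deriv (s : ℝ) : HasDerivAt phi (phi' s) s := by
  have h0 : HasDerivAt (fun s : ℝ => -(2*s)) (-2) s := by
    simpa using ((hasDerivAt_id s).const_mul (2:ℝ)).fun_neg
  have h1 : HasDerivAt (fun s : ℝ => 1 + Real.exp (-(2*s)))
      (Real.exp (-(2*s)) * (-2)) s := (h0.exp).const_add 1
  have hne : (1 + Real.exp (-(2*s))) ≠ 0 := by positivity
  refine HasDerivAt.congr_deriv (f := phi) (h1.fun_inv hne) ?_
  rw [phi']; field_simp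

lemma key (ξ : ℝ) :
    ∫ s : ℝ, Complex.exp (-Complex.I * ξ * s) / (Complex.cosh s) ^ 2
      = 2 * Complex.betaIntegral (1 - Complex.I*ξ/2) (1 + Complex.I*ξ/2) := by
  set g : ℝ → ℂ := fun x => (x:ℂ) ^ (-(Complex.I*ξ/2)) * ((1:ℂ)-x) ^ (Complex.I*ξ/2) with hg
  have hbeta : Complex.betaIntegral (1 - Complex.I*ξ/2) (1 + Complex.I*ξ/2)
      = ∫ x in Set.Ioo (0:ℝ) 1, g x := by
    rw [Complex.betaIntegral, intervalIntegral.integral_of_le zero_le_one,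
      MeasureTheory.integral_Ioc_eq_integral_Ioo]
    have e1 : (1 - Complex.I*↑ξ/2) - 1 = -(Complex.I*↑ξ/2) := by ring
    have e2 : (1 + Complex.I*↑ξ/2) - 1 = Complex.I*↑ξ/2 := by ring
    simp_rw [e1, e2]
    rfl
  have hcov : ∫ x in Set.Ioo (0:ℝ) 1, g x = ∫ s in Set.univ, |phi' s| • g (phi s) := by
    rw [← phi_image]
    exact integral_image_eq_integral_abs_deriv_smul MeasurableSet.univ
      (fun x _ => (phi_deriv x).hasDerivWithinAt) (phi_mono.injective.injOn) g
  have hpt : ∀ s : ℝ, |phi' s| • g (phi s)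
      = (2:ℂ)⁻¹ * (Complex.exp (-Complex.I * ξ * s) / (Complex.cosh s) ^ 2) := by
    intro s
    have hE : 0 < Real.exp (-(2*s)) := Real.exp_pos _
    have hD : 0 < 1 + Real.exp (-(2*s)) := by positivity
    obtain ⟨hx0, hx1⟩ := phi_mem s
    have h1x : (1:ℝ) - phi s = Real.exp (-(2*s)) * (1 + Real.exp (-(2*s)))⁻¹ := by
      rw [phi]; field_simp; ring
    have h1x0 : 0 < 1 - phi s := by linarith
    have hlog : Real.log (1 - phi s) - Real.log (phi s) = -(2*s) := by
      rw [h1x, Real.log_mul (ne_of_gt hE) (by positivity), Real.log_exp, phi, Real.log_inv]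
      ring
    have habs : |phi' s| = phi' s := abs_of_pos (by rw [phi']; positivity)
    have hgs : g (phi s) = Complex.exp (-Complex.I * ξ * s) := by
      have hcast : (1 : ℂ) - (phi s : ℂ) = ((1 - phi s : ℝ) : ℂ) := by push_cast; ring
      rw [hg]
      simp only [hcast]
      rw [Complex.cpow_def_of_ne_zero (by exact_mod_cast ne_of_gt hx0),
        Complex.cpow_def_of_ne_zero (by exact_mod_cast ne_of_gt h1x0),
        ← Complex.ofReal_log hx0.le, ← Complex.ofReal_log h1x0.le, ← Complex.exp_add]
      congr 1
      have : ((Real.log (1 - phi s) : ℂ)) - (Real.log (phi s) : ℂ) = ((-(2*s) : ℝ) : ℂ) := by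
        exact_mod_cast congrArg (fun t : ℝ => (t : ℂ)) hlog
      push_cast at this ⊢
      linear_combination (Complex.I * ξ / 2) * this
    have hcosh : (Real.cosh s)^2 * (2 * phi' s) = 1 := by
      rw [phi', Real.cosh_eq, show -(2*s) = -s + -s by ring, Real.exp_add, Real.exp_neg]
      have hs : Real.exp s ≠ 0 := (Real.exp_pos s).ne'
      field_simp
    have hc : (Complex.cosh (s:ℂ))^2 * (2 * (phi' s : ℂ)) = 1 := by
      rw [← Complex.ofReal_cosh]; exact_mod_cast hcosh
    have hcne : Complex.cosh (s:ℂ) ≠ 0 := by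
      rw [← Complex.ofReal_cosh]; exact_mod_cast (Real.cosh_pos (x := s)).ne'
    rw [habs, hgs, Complex.real_smul]
    simp only [neg_mul]
    field_simp
    linear_combination hc
  rw [hbeta, hcov, MeasureTheory.setIntegral_univ]
  simp_rw [hpt]
  rw [MeasureTheory.integral_const_mul]
  ring

theorem stmt14 :
    (∀ ξ : ℝ, ξ ≠ 0 →
      ∫ s : ℝ, Complex.exp (-Complex.I * ξ * s) / (Complex.cosh s) ^ 2
        = ((π * ξ / Real.sinh (π * ξ / 2) : ℝ) : ℂ))
    ∧ (∫ s : ℝ, Complex.exp (-Complex.I * (0 : ℝ) * s) / (Complex.cosh s) ^ 2 = 2) := by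
  constructor
  · intro ξ hξ
    rw [key ξ]
    set z : ℂ := Complex.I * (ξ:ℂ) / 2 with hzdef
    have hz : z ≠ 0 := by
      simp [hzdef, Complex.I_ne_zero, hξ, Complex.ext_iff]
    have hu : 0 < (1 - z).re := by simp [hzdef]
    have hv : 0 < (1 + z).re := by simp [hzdef]
    have h := Complex.Gamma_mul_Gamma_eq_betaIntegral hu hv
    have hg2 : Complex.Gamma 2 = 1 := by
      rw [show (2:ℂ) = (1:ℕ) + 1 by norm_num, Complex.Gamma_nat_eq_factorial]; simp
    rw [show (1 - z) + (1 + z) = 2 by ring, hg2, one_mul] at h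
    rw [← h, show (1 + z) = z + 1 by ring, Complex.Gamma_add_one _ hz]
    have hrefl := Complex.Gamma_mul_Gamma_one_sub z
    have hsin : Complex.sin ((π:ℂ) * z)
        = ((Real.sinh (π*ξ/2) : ℝ) : ℂ) * Complex.I := by
      rw [show (π:ℂ) * z = ((π*ξ/2 : ℝ):ℂ) * Complex.I by rw [hzdef]; push_cast; ring,
        Complex.sin_mul_I, Complex.ofReal_sinh]
    rw [hsin] at hrefl
    have hS : Real.sinh (π*ξ/2) ≠ 0 := by
      rw [Real.sinh_ne_zero]
      exact div_ne_zero (mul_ne_zero Real.pi_ne_zero hξ) two_ne_zero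
    have hSc : ((Real.sinh (π*ξ/2) : ℝ) : ℂ) ≠ 0 := by exact_mod_cast hS
    rw [show (2:ℂ) * (Complex.Gamma (1 - z) * (z * Complex.Gamma z))
      = 2 * z * (Complex.Gamma z * Complex.Gamma (1-z)) by ring, hrefl, hzdef,
      Complex.ofReal_div, Complex.ofReal_mul]
    field_simp
  · rw [key 0]
    simp only [Complex.ofReal_zero, mul_zero, zero_div, sub_zero, add_zero]
    rw [Complex.betaIntegral_eval_one_right (by norm_num)]
    norm_num
end

section
/- The residue at z = iπ/2 of the function e^{-iξz}/cosh²(z) equals i ξ e^{ξπ/2}. -/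
open Complex Real

private lemma analyticAt_dslope {f : ℂ → ℂ} {z₀ : ℂ} (hf : AnalyticAt ℂ f z₀) :
    AnalyticAt ℂ (dslope f z₀) z₀ := by
  obtain ⟨p, hp⟩ := hf
  exact ⟨_, hp.has_fpower_series_dslope_fslope⟩

private lemma entire_analytic {f : ℂ → ℂ} (hf : Differentiable ℂ f) (z : ℂ) :
    AnalyticAt ℂ f z := hf.analyticAt z

noncomputable def Sfun : ℂ → ℂ := dslope Complex.sinh 0

lemma Sfun_analytic : AnalyticAt ℂ Sfun 0 :=
  analyticAt_dslope ((Complex.differentiable_sinh).analyticAt 0)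

lemma Sfun_zero : Sfun 0 = 1 := by
  simp [Sfun, dslope_same, Complex.deriv_sinh]

lemma sinh_eq (w : ℂ) : Complex.sinh w = w * Sfun w := by
  have := sub_smul_dslope Complex.sinh 0 w
  simpa [Sfun, smul_eq_mul] using this.symm

lemma Sfun_even (w : ℂ) : Sfun (-w) = Sfun w := by
  rcases eq_or_ne w 0 with h | h
  · simp [h]
  · rw [Sfun, dslope_of_ne _ (neg_ne_zero.2 h), dslope_of_ne _ h]
    simp [slope_def_field, Complex.sinh_neg]

lemma deriv_Sfun_zero : deriv Sfun 0 = 0 := by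
  have hd : DifferentiableAt ℂ Sfun 0 := Sfun_analytic.differentiableAt
  have h1 : HasDerivAt Sfun (deriv Sfun 0) 0 := hd.hasDerivAt
  have h1' : HasDerivAt Sfun (deriv Sfun 0) (-(0:ℂ)) := by simpa using h1
  have h2 : HasDerivAt (fun x => Sfun (-x)) (deriv Sfun 0 * (-1)) 0 :=
    h1'.comp 0 (hasDerivAt_neg (0 : ℂ))
  have h3 : (fun x => Sfun (-x)) = Sfun := funext fun x => Sfun_even x
  rw [h3] at h2
  have h4 := h1.unique h2
  linear_combination h4 / 2

noncomputable def Qfun : ℂ → ℂ := dslope Sfun 0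
noncomputable def Rfun : ℂ → ℂ := dslope Qfun 0

lemma Qfun_analytic : AnalyticAt ℂ Qfun 0 := analyticAt_dslope Sfun_analytic
lemma Rfun_analytic : AnalyticAt ℂ Rfun 0 := analyticAt_dslope Qfun_analytic

lemma Sfun_expand (w : ℂ) : Sfun w = 1 + w ^ 2 * Rfun w := by
  have h1 := sub_smul_dslope Sfun 0 w
  have h2 := sub_smul_dslope Qfun 0 w
  have hQ0 : Qfun 0 = 0 := by simp [Qfun, dslope_same, deriv_Sfun_zero]
  rw [hQ0, sub_zero] at h2
  rw [Sfun_zero] at h1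
  simp only [sub_zero, smul_eq_mul] at h1 h2
  rw [show dslope Sfun 0 = Qfun from rfl] at h1
  rw [show dslope Qfun 0 = Rfun from rfl] at h2
  linear_combination -h1 - w * h2

noncomputable def Efun (ξ : ℝ) : ℂ → ℂ := fun w => Complex.exp (-Complex.I * ξ * w)

lemma Efun_diff (ξ : ℝ) : Differentiable ℂ (Efun ξ) :=
  (differentiable_id.const_mul (-Complex.I * ξ)).cexp

noncomputable def Dfun (ξ : ℝ) : ℂ → ℂ := dslope (dslope (Efun ξ) 0) 0

lemma Dfun_analytic (ξ : ℝ) : AnalyticAt ℂ (Dfun ξ) 0 :=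
  analyticAt_dslope (analyticAt_dslope ((Efun_diff ξ).analyticAt 0))

lemma Efun_expand (ξ : ℝ) (w : ℂ) :
    Complex.exp (-Complex.I * ξ * w) = 1 - Complex.I * ξ * w + w ^ 2 * Dfun ξ w := by
  have h1 := sub_smul_dslope (Efun ξ) 0 w
  have h2 := sub_smul_dslope (dslope (Efun ξ) 0) 0 w
  have hE0 : Efun ξ 0 = 1 := by simp [Efun]
  have hd1 : dslope (Efun ξ) 0 0 = -Complex.I * ξ := by
    rw [dslope_same]
    have : HasDerivAt (Efun ξ) (Complex.exp (-Complex.I * ξ * 0) * (-Complex.I * ξ * 1)) 0 :=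
      ((hasDerivAt_id (0:ℂ)).const_mul (-Complex.I * (ξ:ℂ))).cexp
    simpa using this.deriv
  rw [hE0] at h1
  rw [hd1] at h2
  simp only [sub_zero, smul_eq_mul] at h1 h2
  rw [show dslope (dslope (Efun ξ) 0) 0 = Dfun ξ from rfl] at h2
  rw [show Efun ξ w = Complex.exp (-Complex.I * ξ * w) from rfl] at h1
  linear_combination -h1 - w * h2

private lemma comp_sub {f : ℂ → ℂ} (hf : AnalyticAt ℂ f 0) (p : ℂ) :
    AnalyticAt ℂ (fun z => f (z - p)) p := by
  have hsub : AnalyticAt ℂ (fun z : ℂ => z - p) p := analyticAt_id.sub analyticAt_const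
  have hf' : AnalyticAt ℂ f ((fun z : ℂ => z - p) p) := by simpa using hf
  have h2 := AnalyticAt.comp (g := f) (f := fun z : ℂ => z - p) (x := p) hf' hsub
  exact h2

theorem stmt15 (ξ : ℝ) :
    ∃ g : ℂ → ℂ, AnalyticAt ℂ g (Real.pi / 2 * Complex.I) ∧
      ∀ᶠ z in nhdsWithin (Real.pi / 2 * Complex.I) {(Real.pi / 2 * Complex.I : ℂ)}ᶜ,
        Complex.exp (-Complex.I * ξ * z) / (Complex.cosh z) ^ 2
          = (-(Real.exp (ξ * Real.pi / 2) : ℂ)) / (z - Real.pi / 2 * Complex.I) ^ 2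
            + (Complex.I * ξ * Real.exp (ξ * Real.pi / 2)) / (z - Real.pi / 2 * Complex.I)
            + g z := by
  set p : ℂ := Real.pi / 2 * Complex.I with hp
  set A : ℂ := ((Real.exp (ξ * Real.pi / 2) : ℝ) : ℂ) with hA
  refine ⟨fun z => -A * Dfun ξ (z - p) -
      A * Complex.exp (-Complex.I * ξ * (z - p)) *
        (-(Rfun (z - p)) * (2 + (z - p) ^ 2 * Rfun (z - p)) / (Sfun (z - p)) ^ 2), ?_, ?_⟩
  · -- analyticity
    have hsub : AnalyticAt ℂ (fun z : ℂ => z - p) p := analyticAt_id.sub analyticAt_const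
    have h0 : (fun z : ℂ => z - p) p = 0 := sub_self p
    have hD : AnalyticAt ℂ (fun z => Dfun ξ (z - p)) p := comp_sub (Dfun_analytic ξ) p
    have hR : AnalyticAt ℂ (fun z => Rfun (z - p)) p := comp_sub Rfun_analytic p
    have hS : AnalyticAt ℂ (fun z => Sfun (z - p)) p := comp_sub Sfun_analytic p
    have hSne : (fun z => Sfun (z - p)) p ^ 2 ≠ 0 := by
      simp [sub_self, Sfun_zero]
    have hexp : AnalyticAt ℂ (fun z => Complex.exp (-Complex.I * ξ * (z - p))) p :=
      (((Efun_diff ξ).comp (differentiable_id.sub_const p)).analyticAt p)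
    exact (analyticAt_const.mul hD).sub
      ((analyticAt_const.mul hexp).mul
        ((hR.neg.mul (analyticAt_const.add ((hsub.pow 2).mul hR))).div (hS.pow 2) hSne))
  · -- eventual equality
    have hten : Filter.Tendsto (fun z : ℂ => Sfun (z - p)) (nhds p) (nhds 1) := by
      have h1 : Filter.Tendsto (fun z : ℂ => z - p) (nhds p) (nhds 0) := by
        have := (continuous_id.sub (continuous_const (y := p))).tendsto p
        rw [show (0:ℂ) = id p - p by simp]; exact this
      have h2 : Filter.Tendsto Sfun (nhds 0) (nhds 1) := by
        have := Sfun_analytic.continuousAt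
        rwa [ContinuousAt, Sfun_zero] at this
      exact h2.comp h1
    have hS : ∀ᶠ z in nhds p, Sfun (z - p) ≠ 0 := hten.eventually_ne one_ne_zero
    have hS' := eventually_nhdsWithin_of_eventually_nhds (s := {(p : ℂ)}ᶜ) hS
    filter_upwards [hS', self_mem_nhdsWithin] with z hs hz
    have hz' : z ≠ p := hz
    have hw0 : z - p ≠ 0 := sub_ne_zero.2 hz'
    have hzw : z = (z - p) + p := by ring
    have hcosh : Complex.cosh z = Complex.I * Complex.sinh (z - p) := by
      rw [hzw, Complex.cosh_add]
      rw [hp]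
      rw [show (↑Real.pi / 2 * Complex.I : ℂ) = (↑Real.pi / 2 : ℂ) * Complex.I from rfl]
      rw [Complex.cosh_mul_I, Complex.sinh_mul_I, Complex.cos_pi_div_two, Complex.sin_pi_div_two]
      ring
    have hIp : (-Complex.I * (ξ : ℂ) * p) = ((ξ * Real.pi / 2 : ℝ) : ℂ) := by
      rw [hp]; push_cast
      linear_combination (-(ξ : ℂ) * Real.pi / 2) * Complex.I_sq
    have hexp : Complex.exp (-Complex.I * ξ * z) = A * Complex.exp (-Complex.I * ξ * (z - p)) := by
      rw [show -Complex.I * (ξ:ℂ) * z = -Complex.I * ξ * (z - p) + -Complex.I * (ξ:ℂ) * p by ring,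
        Complex.exp_add, hIp, hA, Complex.ofReal_exp, mul_comm]
    have hsinh : Complex.sinh (z - p) = (z - p) * Sfun (z - p) := sinh_eq _
    have hSx : Sfun (z - p) = 1 + (z - p) ^ 2 * Rfun (z - p) := Sfun_expand _
    have hE := Efun_expand ξ (z - p)
    rw [hexp, hcosh, mul_pow, Complex.I_sq, neg_one_mul, hsinh, hE]
    rw [hSx] at hs ⊢
    generalize Rfun (z - p) = r at *
    generalize Dfun ξ (z - p) = d at *
    generalize hww : z - p = w at *
    set_option maxHeartbeats 1000000 in
    field_simp [hw0, hs]
    set_option maxHeartbeats 1000000 in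
    ring
end

section
/- For z = (z1,z2) and w = (w1,w2) in the unwound worm U, setting λ = −i(z1 − w̄1), the bound |e^{−(z1+w̄1)/2} z2 w̄2| < exp{arccos(e^{−Re λ /2})} holds; more precisely |e^{−(z1+w̄1)/2} z2 w̄2| = exp{(log|z2|² − Re z1 + log|w2|² − Re w1)/2} and the concavity of r ↦ arccos(e^r) on (−∞,0] gives (arccos(e^{−Im z1}) + arccos(e^{−Im w1}))/2 ≤ arccos(e^{−(Im z1 + Im w1)/2}). -/
open Real Complex Set

lemma arccos_antitone : Antitone Real.arccos := by
  intro x y h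
  simp only [Real.arccos_eq_pi_div_two_sub_arcsin]
  have := Real.monotone_arcsin h
  linarith

lemma midpoint_arccos (a b : ℝ) (ha : 0 < a) (hb : 0 < b) :
    (Real.arccos (Real.exp (-a)) + Real.arccos (Real.exp (-b))) / 2
      ≤ Real.arccos (Real.exp (-(a + b) / 2)) := by
  set α := Real.arccos (Real.exp (-a)) with hα
  set β := Real.arccos (Real.exp (-b)) with hβ
  have hea : Real.exp (-a) ≤ 1 := Real.exp_le_one_iff.mpr (by linarith)
  have heb : Real.exp (-b) ≤ 1 := Real.exp_le_one_iff.mpr (by linarith)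
  have hca : Real.cos α = Real.exp (-a) :=
    Real.cos_arccos (by linarith [Real.exp_pos (-a)]) hea
  have hcb : Real.cos β = Real.exp (-b) :=
    Real.cos_arccos (by linarith [Real.exp_pos (-b)]) heb
  have hα0 : 0 ≤ α := Real.arccos_nonneg _
  have hβ0 : 0 ≤ β := Real.arccos_nonneg _
  have hα2 : α ≤ π / 2 := Real.arccos_le_pi_div_two.mpr (Real.exp_pos _).le
  have hβ2 : β ≤ π / 2 := Real.arccos_le_pi_div_two.mpr (Real.exp_pos _).le
  have hcos_nonneg : 0 ≤ Real.cos ((α + β) / 2) :=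
    Real.cos_nonneg_of_mem_Icc ⟨by linarith [Real.pi_pos], by linarith⟩
  have hsq : Real.cos ((α + β) / 2) ^ 2 = (1 + Real.cos (α + β)) / 2 := by
    rw [Real.cos_sq]
    ring_nf
  have hcadd : Real.cos (α + β) = Real.cos α * Real.cos β - Real.sin α * Real.sin β :=
    Real.cos_add α β
  have hcsub : Real.cos α * Real.cos β + Real.sin α * Real.sin β ≤ 1 := by
    rw [← Real.cos_sub]; exact Real.cos_le_one _
  have hx : Real.exp (-(a + b) / 2) ^ 2 = Real.cos α * Real.cos β := by
    rw [hca, hcb, ← Real.exp_add, ← Real.exp_nat_mul]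
    · ring_nf
  have hxpos : (0:ℝ) < Real.exp (-(a + b) / 2) := Real.exp_pos _
  have key : Real.exp (-(a + b) / 2) ≤ Real.cos ((α + β) / 2) := by
    nlinarith [sq_nonneg (Real.exp (-(a+b)/2) - Real.cos ((α+β)/2))]
  have := arccos_antitone key
  rwa [Real.arccos_cos (by linarith) (by linarith)] at this

theorem stmt18 (z w : ℂ × ℂ) (hz : z ∈ wormU) (hw : w ∈ wormU) :
    ‖Complex.exp (-(z.1 + (starRingEnd ℂ) w.1) / 2) * z.2 * (starRingEnd ℂ) w.2‖
        = Real.exp ((Real.log (‖z.2‖ ^ 2) - z.1.re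
            + Real.log (‖w.2‖ ^ 2) - w.1.re) / 2)
    ∧ (Real.arccos (Real.exp (-z.1.im)) + Real.arccos (Real.exp (-w.1.im))) / 2
        ≤ Real.arccos (Real.exp (-(z.1.im + w.1.im) / 2))
    ∧ ‖Complex.exp (-(z.1 + (starRingEnd ℂ) w.1) / 2) * z.2 * (starRingEnd ℂ) w.2‖
        < Real.exp (Real.arccos (Real.exp (-(-Complex.I * (z.1 - (starRingEnd ℂ) w.1)).re / 2))) := by
  obtain ⟨hz1, hz2, hz3⟩ := hz
  obtain ⟨hw1, hw2, hw3⟩ := hw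
  have habsz : (0:ℝ) < ‖z.2‖ := norm_pos_iff.mpr hz3
  have habsw : (0:ℝ) < ‖w.2‖ := norm_pos_iff.mpr hw3
  have hlogz : Real.log (‖z.2‖ ^ 2) = 2 * Real.log (‖z.2‖) := by
    rw [Real.log_pow]; push_cast; ring
  have hlogw : Real.log (‖w.2‖ ^ 2) = 2 * Real.log (‖w.2‖) := by
    rw [Real.log_pow]; push_cast; ring
  have hre : (-(z.1 + (starRingEnd ℂ) w.1) / 2).re = -(z.1.re + w.1.re) / 2 := by
    simp [Complex.div_re]
  have h1 : ‖Complex.exp (-(z.1 + (starRingEnd ℂ) w.1) / 2) * z.2 * (starRingEnd ℂ) w.2‖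
      = Real.exp ((Real.log (‖z.2‖ ^ 2) - z.1.re
          + Real.log (‖w.2‖ ^ 2) - w.1.re) / 2) := by
    rw [norm_mul, norm_mul, Complex.norm_exp, Complex.norm_conj, hre, hlogz, hlogw]
    rw [show (2 * Real.log (‖z.2‖) - z.1.re + 2 * Real.log (‖w.2‖) - w.1.re) / 2
        = -(z.1.re + w.1.re) / 2 + Real.log (‖z.2‖) + Real.log (‖w.2‖) by ring]
    rw [Real.exp_add, Real.exp_add, Real.exp_log habsz, Real.exp_log habsw]
  have h2 := midpoint_arccos z.1.im w.1.im hz1 hw1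
  refine ⟨h1, h2, ?_⟩
  have hlam : (-Complex.I * (z.1 - (starRingEnd ℂ) w.1)).re = z.1.im + w.1.im := by
    simp [Complex.mul_re]
  rw [hlam, h1]
  apply Real.exp_lt_exp.mpr
  have hz' : Real.log (‖z.2‖ ^ 2) - z.1.re < Real.arccos (Real.exp (-z.1.im)) := by
    have := abs_lt.mp hz2
    linarith [this.1]
  have hw' : Real.log (‖w.2‖ ^ 2) - w.1.re < Real.arccos (Real.exp (-w.1.im)) := by
    have := abs_lt.mp hw2
    linarith [this.1]
  calc (Real.log (‖z.2‖ ^ 2) - z.1.re + Real.log (‖w.2‖ ^ 2) - w.1.re) / 2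
      < (Real.arccos (Real.exp (-z.1.im)) + Real.arccos (Real.exp (-w.1.im))) / 2 := by linarith
    _ ≤ Real.arccos (Real.exp (-(z.1.im + w.1.im) / 2)) := h2
end
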